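/- arXiv:2003.06590 — 4 statements merged into one kernel-verified Lean document; each statement's English description precedes it below -/
import Mathlib

section
/- Let τ_n = min{ i ∈ {0,...,n} : S_i = min_{0≤j≤n} S_j } be the first time the minimum of S_0,...,S_n is attained. For each fixed i ∈ ℕ, each k with 0 ≤ k ≤ n − i, and each Borel set A ⊆ ℝ, one has P(S_{τ_n + i} − S_{τ_n} ∈ A, τ_n = k) = P(S_i ∈ A | L_{n−k} ≥ 0) · P(τ_n = k), where L_m = min_{0≤j≤m} S_j. -/
open MeasureTheory ProbabilityTheory

/-!
On `{τ_n = k}` the walk stays strictly above `S_k` before time `k`, and the increments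
`X_k, X_{k+1}, …` have nonnegative partial sums up to time `n - k`. The first condition only
involves `X_0, …, X_{k-1}`; the second one, like the event `S_{k+i} - S_k ∈ A`, is an event about
the shifted sequence `(X_{k+j})_j`, which is independent of the first block and has the same law
as `(X_j)_j`. Both sides therefore factor through the same probability of the prefix event.
-/

theorem sInf_argmin_eq_iff {α : Type*} [LinearOrder α] (s : ℕ → α) {k n : ℕ} (hkn : k ≤ n) :
    sInf {i | i ≤ n ∧ s i = (Finset.range (n + 1)).inf' Finset.nonempty_range_add_one s} = k ↔
      (∀ j < k, s k < s j) ∧ ∀ j, k ≤ j → j ≤ n → s k ≤ s j := by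
  set m := (Finset.range (n + 1)).inf' Finset.nonempty_range_add_one s
  have hm_le : ∀ j ≤ n, m ≤ s j := fun j hj =>
    Finset.inf'_le _ (Finset.mem_range.2 (Nat.lt_succ_of_le hj))
  constructor
  · intro h
    obtain ⟨j₀, hj₀, hj₀m⟩ := Finset.exists_mem_eq_inf' Finset.nonempty_range_add_one s
    have hk : k ≤ n ∧ s k = m := h ▸ Nat.sInf_mem (s := {i | i ≤ n ∧ s i = m})
      ⟨j₀, Nat.le_of_lt_succ (Finset.mem_range.1 hj₀), hj₀m.symm⟩
    refine ⟨fun j hjk => lt_of_not_ge fun hjle => ?_, fun j _ hjn => hk.2 ▸ hm_le j hjn⟩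
    have hj : j ≤ n ∧ s j = m := ⟨by omega, le_antisymm (hk.2 ▸ hjle) (hm_le j (by omega))⟩
    exact absurd (h ▸ Nat.sInf_le hj) (not_le.2 hjk)
  · rintro ⟨hlt, hge⟩
    have hkm : s k = m := le_antisymm (Finset.le_inf' _ _ fun l hl =>
      (lt_or_ge l k).elim (fun h => (hlt l h).le) fun h =>
        hge l h (Nat.le_of_lt_succ (Finset.mem_range.1 hl))) (hm_le k hkn)
    refine le_antisymm (Nat.sInf_le ⟨hkn, hkm⟩) (le_csInf ⟨k, hkn, hkm⟩ ?_)
    rintro j ⟨-, hjm⟩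
    exact not_lt.1 fun hjk => (hlt j hjk).ne (hkm.trans hjm.symm)

def partialSumsNonneg (N : ℕ) : Set (ℕ → ℝ) :=
  {x | ∀ d ≤ N, 0 ≤ ∑ j ∈ Finset.range d, x j}

theorem measurable_sum_range_apply (d : ℕ) :
    Measurable fun x : ℕ → ℝ => ∑ j ∈ Finset.range d, x j :=
  Finset.measurable_sum _ fun j _ => measurable_pi_apply j

theorem measurableSet_partialSumsNonneg (N : ℕ) : MeasurableSet (partialSumsNonneg N) := by
  simp only [partialSumsNonneg, Set.ofPred_forall]
  exact MeasurableSet.iInter fun d => MeasurableSet.iInter fun _ =>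
    measurableSet_le measurable_const (measurable_sum_range_apply d)

theorem forall_sum_range_le_iff_shift_mem_partialSumsNonneg (x : ℕ → ℝ) (k N : ℕ) :
    (∀ j, k ≤ j → j ≤ k + N → ∑ l ∈ Finset.range k, x l ≤ ∑ l ∈ Finset.range j, x l) ↔
      (fun j => x (k + j)) ∈ partialSumsNonneg N := by
  simp only [partialSumsNonneg, Set.mem_ofPred_eq]
  constructor
  · intro h d hd
    simpa [Finset.sum_range_add] using h (k + d) (Nat.le_add_right k d) (by omega)
  · intro h j hkj hjN
    obtain ⟨d, rfl⟩ := Nat.exists_eq_add_of_le hkj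
    simpa [Finset.sum_range_add] using h d (by omega)

theorem sInf_argmin_sum_range_eq_iff (x : ℕ → ℝ) {k n : ℕ} (hkn : k ≤ n) :
    sInf {i | i ≤ n ∧ ∑ j ∈ Finset.range i, x j = (Finset.range (n + 1)).inf'
        Finset.nonempty_range_add_one (fun d => ∑ j ∈ Finset.range d, x j)} = k ↔
      (∀ j < k, ∑ l ∈ Finset.range k, x l < ∑ l ∈ Finset.range j, x l) ∧
        (fun j => x (k + j)) ∈ partialSumsNonneg (n - k) := by
  rw [sInf_argmin_eq_iff _ hkn, ← forall_sum_range_le_iff_shift_mem_partialSumsNonneg,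
    Nat.add_sub_cancel' hkn]

theorem le_inf'_range_iff_mem_partialSumsNonneg (x : ℕ → ℝ) (N : ℕ) :
    0 ≤ (Finset.range (N + 1)).inf' Finset.nonempty_range_add_one
        (fun d => ∑ j ∈ Finset.range d, x j) ↔ x ∈ partialSumsNonneg N := by
  simp [partialSumsNonneg, Finset.le_inf'_iff]

section IIDShift

variable {Ω β : Type*} [MeasurableSpace Ω] [mβ : MeasurableSpace β] {μ : Measure Ω}
  {X : ℕ → Ω → β}

theorem map_shift_eq_map_of_iIndepFun (hmeas : ∀ i, Measurable (X i)) (hindep : iIndepFun X μ)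
    (hident : ∀ i, μ.map (X i) = μ.map (X 0)) (k : ℕ) :
    μ.map (fun ω j => X (k + j) ω) = μ.map (fun ω j => X j ω) := by
  rw [(hindep.precomp (add_right_injective k)).map_fun_eq_infinitePi_map fun j => hmeas (k + j),
    hindep.map_fun_eq_infinitePi_map hmeas]
  simp only [hident]

theorem indep_iSup_lt_comap_shift (hmeas : ∀ i, Measurable (X i)) (hindep : iIndepFun X μ)
    (k : ℕ) :
    Indep (⨆ j ∈ Set.Iio k, mβ.comap (X j))
      (MeasurableSpace.pi.comap fun ω j => X (k + j) ω) μ := by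
  refine indep_of_indep_of_le_right (indep_iSup_of_disjoint (fun j => (hmeas j).comap_le)
    hindep.iIndep (Set.Iio_disjoint_Ici le_rfl)) (Measurable.comap_le ?_)
  exact @measurable_pi_lambda _ _ _ (⨆ j ∈ Set.Ici k, mβ.comap (X j)) _ _ fun j =>
    Measurable.of_comap_le (le_iSup₂ (f := fun i (_ : i ∈ Set.Ici k) => mβ.comap (X i)) (k + j)
      (Nat.le_add_right k j))

theorem measure_inter_preimage_shift_eq_mul (hmeas : ∀ i, Measurable (X i))
    (hindep : iIndepFun X μ) (hident : ∀ i, μ.map (X i) = μ.map (X 0)) {k : ℕ} {E : Set Ω}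
    (hE : MeasurableSet[⨆ j ∈ Set.Iio k, mβ.comap (X j)] E) {T : Set (ℕ → β)}
    (hT : MeasurableSet T) :
    μ (E ∩ (fun ω j => X (k + j) ω) ⁻¹' T) = μ E * μ ((fun ω j => X j ω) ⁻¹' T) := by
  rw [(Indep_iff _ _ μ).1 (indep_iSup_lt_comap_shift hmeas hindep k) _ _ hE ⟨T, hT, rfl⟩,
    ← Measure.map_apply (measurable_pi_lambda _ fun j => hmeas (k + j)) hT,
    map_shift_eq_map_of_iIndepFun hmeas hindep hident k,
    Measure.map_apply (measurable_pi_lambda _ hmeas) hT]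

end IIDShift

theorem measurableSet_forall_lt_sum_range {Ω : Type*} (X : ℕ → Ω → ℝ) (k : ℕ) :
    MeasurableSet[⨆ m ∈ Set.Iio k, MeasurableSpace.comap (X m) inferInstance]
      {ω | ∀ j < k, ∑ m ∈ Finset.range k, X m ω < ∑ m ∈ Finset.range j, X m ω} := by
  let _ := ⨆ m ∈ Set.Iio k, MeasurableSpace.comap (X m) inferInstance
  have hsum : ∀ j ≤ k, Measurable fun ω => ∑ m ∈ Finset.range j, X m ω := fun j hjk =>
    Finset.measurable_sum _ fun m hm => Measurable.of_comap_le
      (le_iSup₂ (f := fun m (_ : m ∈ Set.Iio k) => MeasurableSpace.comap (X m) inferInstance) m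
        (lt_of_lt_of_le (Finset.mem_range.1 hm) hjk))
  simp only [Set.ofPred_forall]
  exact MeasurableSet.iInter fun j => MeasurableSet.iInter fun hj =>
    measurableSet_lt (hsum k le_rfl) (hsum j hj.le)

theorem stmt1_general {Ω : Type*} [MeasureSpace Ω] [IsProbabilityMeasure (ℙ : Measure Ω)]
    (X : ℕ → Ω → ℝ) (hmeas : ∀ i, Measurable (X i))
    (hindep : iIndepFun X ℙ)
    (hident : ∀ i, Measure.map (X i) ℙ = Measure.map (X 0) ℙ)
    (S L : ℕ → Ω → ℝ) (τ : ℕ → Ω → ℕ)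
    (hS : ∀ n ω, S n ω = ∑ i ∈ Finset.range n, X i ω)
    (hL : ∀ n ω, L n ω = (Finset.range (n+1)).inf' Finset.nonempty_range_add_one
      (fun j => S j ω))
    (hτ : ∀ n ω, τ n ω = sInf {i | i ≤ n ∧ S i ω = L n ω})
    (i k n : ℕ) (hk : k ≤ n - i)
    (A : Set ℝ) (hA : MeasurableSet A) :
    ℙ {ω | S (τ n ω + i) ω - S (τ n ω) ω ∈ A ∧ τ n ω = k}
      = (ℙ[|{ω | 0 ≤ L (n - k) ω}]) {ω | S i ω ∈ A} * ℙ {ω | τ n ω = k} := by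
  obtain rfl : S = fun n ω => ∑ i ∈ Finset.range n, X i ω := funext fun n => funext (hS n)
  obtain rfl : L = fun n ω => (Finset.range (n+1)).inf' Finset.nonempty_range_add_one
      (fun j => ∑ i ∈ Finset.range j, X i ω) := funext fun n => funext (hL n)
  clear hS hL
  beta_reduce at hτ ⊢
  have hkn : k ≤ n := hk.trans (Nat.sub_le n i)
  set E := {ω | ∀ j < k, ∑ m ∈ Finset.range k, X m ω < ∑ m ∈ Finset.range j, X m ω}
  set Y : Ω → ℕ → ℝ := fun ω j => X (k + j) ω
  set Z : Ω → ℕ → ℝ := fun ω j => X j ω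
  set C := partialSumsNonneg (n - k)
  set D := {x : ℕ → ℝ | ∑ j ∈ Finset.range i, x j ∈ A}
  have hC : MeasurableSet C := measurableSet_partialSumsNonneg (n - k)
  have hD : MeasurableSet D := measurable_sum_range_apply i hA
  have hτk : {ω | τ n ω = k} = E ∩ Y ⁻¹' C := by
    ext ω
    rw [Set.mem_ofPred_eq, hτ]
    exact sInf_argmin_sum_range_eq_iff (Z ω) hkn
  have hLHS : {ω | ∑ m ∈ Finset.range (τ n ω + i), X m ω - ∑ m ∈ Finset.range (τ n ω), X m ω ∈ A
      ∧ τ n ω = k} = E ∩ Y ⁻¹' (D ∩ C) := by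
    rw [Set.preimage_inter, Set.inter_left_comm, ← hτk]
    ext ω
    refine and_congr_left fun hτω => ?_
    rw [hτω, Finset.sum_range_add, add_sub_cancel_left]
    rfl
  have hcond : {ω | 0 ≤ (Finset.range (n - k + 1)).inf' Finset.nonempty_range_add_one
      (fun j => ∑ m ∈ Finset.range j, X m ω)} = Z ⁻¹' C :=
    Set.ext fun ω => le_inf'_range_iff_mem_partialSumsNonneg (Z ω) (n - k)
  have hSi : {ω | ∑ m ∈ Finset.range i, X m ω ∈ A} = Z ⁻¹' D := rfl
  have hE := measurableSet_forall_lt_sum_range X k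
  rw [hLHS, hτk, hcond, hSi, measure_inter_preimage_shift_eq_mul hmeas hindep hident hE (hD.inter hC),
    measure_inter_preimage_shift_eq_mul hmeas hindep hident hE hC, mul_left_comm,
    cond_mul_eq_inter (measurable_pi_lambda _ hmeas hC), Set.preimage_inter, Set.inter_comm]

theorem stmt1 {Ω : Type*} [MeasureSpace Ω] [IsProbabilityMeasure (ℙ : Measure Ω)]
    (X : ℕ → Ω → ℝ) (hmeas : ∀ i, Measurable (X i))
    (hindep : iIndepFun X ℙ)
    (hident : ∀ i, Measure.map (X i) ℙ = Measure.map (X 0) ℙ)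
    (S L : ℕ → Ω → ℝ) (τ : ℕ → Ω → ℕ)
    (hS : ∀ n ω, S n ω = ∑ i ∈ Finset.range n, X i ω)
    (hL : ∀ n ω, L n ω = (Finset.range (n+1)).inf' Finset.nonempty_range_add_one
      (fun j => S j ω))
    (hτ : ∀ n ω, τ n ω = sInf {i | i ≤ n ∧ S i ω = L n ω})
    (i k n : ℕ) (hin : i ≤ n) (hk : k ≤ n - i)
    (hpos : 0 < ℙ {ω | 0 ≤ L (n - k) ω})
    (A : Set ℝ) (hA : MeasurableSet A) :
    ℙ {ω | S (τ n ω + i) ω - S (τ n ω) ω ∈ A ∧ τ n ω = k}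
      = (ℙ[|{ω | 0 ≤ L (n - k) ω}]) {ω | S i ω ∈ A} * ℙ {ω | τ n ω = k} :=
  stmt1_general X hmeas hindep hident S L τ hS hL hτ i k n hk A hA
end

section
/- With τ_n the first time of the minimum of S_0,...,S_n, for each fixed i ∈ ℕ, each k with i ≤ k ≤ n, and each Borel set A ⊆ ℝ, one has P(S_{τ_n − i} − S_{τ_n} ∈ A, τ_n = k) = P(−S_i ∈ A | M_k < 0) · P(τ_n = k), where M_k = max_{1≤j≤k} S_j. -/
open MeasureTheory ProbabilityTheory Finset

/-!
On `{τ n = k}` the increment `S (τ n - i) - S (τ n)` equals `S (k - i) - S k`, and `{τ n = k}` is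
the intersection of the event that `S k` is a strict minimum of `S 0, …, S k`, which depends only
on `X 0, …, X (k-1)`, with the event that `S k ≤ S j` for `k < j ≤ n`, which depends only on
`X k, X (k+1), …`. By independence the probability factors. Reversing the order of
`X 0, …, X (k-1)` does not change their joint law and turns `S m` into `S k - S (k - m)`, so the
first event, jointly with `S (k - i) - S k ∈ A`, has the probability of `{M k < 0, -S i ∈ A}`.
-/

theorem sInf_argmin_range_eq_iff {α : Type*} [LinearOrder α] (s : ℕ → α) {k n : ℕ}
    (hkn : k ≤ n) :
    sInf {i | i ≤ n ∧ s i = (range (n + 1)).inf' nonempty_range_add_one s} = k ↔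
      (∀ j < k, s k < s j) ∧ ∀ j, k < j → j ≤ n → s k ≤ s j := by
  set m := (range (n + 1)).inf' nonempty_range_add_one s
  have hle : ∀ j ≤ n, m ≤ s j := fun j hj => inf'_le _ (by simpa [Nat.lt_succ_iff])
  have heq : s k = m ↔ ∀ j ≤ n, s k ≤ s j :=
    ⟨fun h j hj => h ▸ hle j hj,
      fun h => (le_inf' _ _ fun j hj => h j (by simpa [Nat.lt_succ_iff] using hj)).antisymm
        (hle k hkn)⟩
  obtain ⟨j₀, hj₀, hj₀m⟩ := exists_mem_eq_inf' nonempty_range_add_one s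
  have hne : {i | i ≤ n ∧ s i = m}.Nonempty :=
    ⟨j₀, by simpa [Nat.lt_succ_iff] using hj₀, hj₀m.symm⟩
  have hleast : sInf {i | i ≤ n ∧ s i = m} = k ↔
      (k ≤ n ∧ s k = m) ∧ ∀ j < k, ¬(j ≤ n ∧ s j = m) :=
    ⟨fun h => h ▸ ⟨Nat.sInf_mem hne, fun _ => Nat.notMem_of_lt_sInf⟩,
      fun ⟨hk, hfirst⟩ => IsLeast.csInf_eq ⟨hk, fun j hj => not_lt.1 fun h => hfirst j h hj⟩⟩
  simp only [hleast, heq, hkn, true_and, not_and]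
  constructor
  · rintro ⟨hmin, hfirst⟩
    refine ⟨fun j hj => (hmin j (by omega)).lt_of_ne fun h => ?_, fun j _ hjn => hmin j hjn⟩
    exact hfirst j hj (by omega) (h ▸ heq.2 hmin)
  · rintro ⟨hlt, hle'⟩
    refine ⟨fun j hjn => ?_, fun j hj _ hjm => (hlt j hj).not_ge (hjm ▸ hle k hkn)⟩
    rcases lt_trichotomy j k with h | rfl | h
    · exact (hlt j h).le
    · exact le_rfl
    · exact hle' j h hjn

def revBelow (k : ℕ) : Equiv.Perm ℕ :=
  Function.Involutive.toPerm (fun j => if j < k then k - 1 - j else j) fun j => by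
    dsimp only; split_ifs <;> omega

theorem revBelow_apply (k j : ℕ) : revBelow k j = if j < k then k - 1 - j else j := rfl

theorem sum_range_revBelow {G : Type*} [AddCommGroup G] (x : ℕ → G) {m k : ℕ} (hmk : m ≤ k) :
    ∑ l ∈ range m, x (revBelow k l) = ∑ l ∈ range k, x l - ∑ l ∈ range (k - m), x l := by
  rcases Nat.eq_zero_or_pos k with rfl | hk
  · simp [Nat.le_zero.mp hmk]
  have hrev : ∀ l ∈ range m, x (revBelow k l) = x (k - 1 - l) := fun l hl => by
    rw [revBelow_apply, if_pos ((mem_range.1 hl).trans_le hmk)]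
  rw [sum_congr rfl hrev, ← Nat.Ico_zero_eq_range, sum_Ico_reflect _ _ (by omega),
    Nat.sub_add_cancel hk, Nat.sub_zero, sum_Ico_eq_sub _ (Nat.sub_le k m)]

theorem ProbabilityTheory.iIndepFun.identDistrib_comp_perm {Ω ι β : Type*} [MeasurableSpace Ω]
    [MeasurableSpace β] {μ : Measure Ω} [IsProbabilityMeasure μ] {X : ι → Ω → β} {ν : Measure β}
    (hmeas : ∀ i, Measurable (X i)) (hindep : iIndepFun X μ) (hident : ∀ i, μ.map (X i) = ν)
    (σ : Equiv.Perm ι) :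
    IdentDistrib (fun ω i => X (σ i) ω) (fun ω i => X i ω) μ μ where
  aemeasurable_fst := (measurable_pi_lambda _ fun i => hmeas (σ i)).aemeasurable
  aemeasurable_snd := (measurable_pi_lambda _ hmeas).aemeasurable
  map_eq := by
    rw [(hindep.precomp σ.injective).map_fun_eq_infinitePi_map (fun i => hmeas (σ i)),
      hindep.map_fun_eq_infinitePi_map hmeas]
    simp only [hident]

theorem measurable_sum_iSup_comap {Ω β : Type*} [MeasurableSpace β] [AddCommMonoid β]
    [MeasurableAdd₂ β] (X : ℕ → Ω → β) {T : Set ℕ} (s : Finset ℕ) (hs : ↑s ⊆ T) :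
    Measurable[⨆ j ∈ T, MeasurableSpace.comap (X j) inferInstance] fun ω => ∑ l ∈ s, X l ω :=
  Finset.measurable_sum _ fun l hl => (comap_measurable (X l)).mono
    (le_iSup₂ (f := fun j _ => MeasurableSpace.comap (X j) inferInstance) l (hs hl)) le_rfl

section RandomWalk

theorem measurableSet_strictPrefixMin {Ω : Type*} {_ : MeasurableSpace Ω} {S : ℕ → Ω → ℝ} {i k : ℕ}
    (hS : ∀ j ≤ k, Measurable (S j)) {A : Set ℝ} (hA : MeasurableSet A) :
    MeasurableSet {ω | S (k - i) ω - S k ω ∈ A ∧ ∀ j < k, S k ω < S j ω} := by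
  rw [Set.ofPred_and]
  refine (((hS _ (Nat.sub_le k i)).sub (hS k le_rfl)) hA).inter ?_
  simp only [Set.ofPred_forall]
  exact .iInter fun j => .iInter fun hj => measurableSet_lt (hS k le_rfl) (hS j hj.le)

theorem measurableSet_weakSuffixMin {Ω : Type*} {_ : MeasurableSpace Ω} {S : ℕ → Ω → ℝ} {k : ℕ}
    (hS : ∀ j, k < j → Measurable fun ω => S j ω - S k ω) (n : ℕ) :
    MeasurableSet {ω | ∀ j, k < j → j ≤ n → S k ω ≤ S j ω} := by
  simp only [← sub_nonneg (b := S _ _), Set.ofPred_forall]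
  exact .iInter fun j => .iInter fun hj => .iInter fun _ =>
    measurableSet_le measurable_const (hS j hj)

variable {Ω : Type*} [MeasurableSpace Ω] {μ : Measure Ω} {X S : ℕ → Ω → ℝ}

theorem measure_strictPrefixMin_eq_measure_prefix_neg [IsProbabilityMeasure μ]
    (hmeas : ∀ i, Measurable (X i)) (hindep : iIndepFun X μ)
    (hident : ∀ i, μ.map (X i) = μ.map (X 0)) (hS : ∀ n ω, S n ω = ∑ i ∈ range n, X i ω)
    {i k : ℕ} (hik : i ≤ k) {A : Set ℝ} (hA : MeasurableSet A) :
    μ {ω | S (k - i) ω - S k ω ∈ A ∧ ∀ j < k, S k ω < S j ω}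
      = μ {ω | -S i ω ∈ A ∧ ∀ j, 1 ≤ j → j ≤ k → S j ω < 0} := by
  let E : Set (ℕ → ℝ) :=
    {x | -∑ l ∈ range i, x l ∈ A ∧ ∀ j, 1 ≤ j → j ≤ k → ∑ l ∈ range j, x l < 0}
  have hE : MeasurableSet E := by measurability
  have hrev := (hindep.identDistrib_comp_perm hmeas hident (revBelow k)).measure_mem_eq hE
  have hsum : ∀ ω, ∀ j ≤ k, ∑ l ∈ range j, X (revBelow k l) ω = S k ω - S (k - j) ω :=
    fun ω j hj => by simpa only [hS] using sum_range_revBelow (X · ω) hj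
  have hreindex : ∀ ω, (∀ j, 1 ≤ j → j ≤ k → S k ω < S (k - j) ω) ↔ ∀ j < k, S k ω < S j ω :=
    fun ω => ⟨fun h j hj => by
        simpa [Nat.sub_sub_self hj.le] using h (k - j) (by omega) (Nat.sub_le k j),
      fun h j _ _ => h _ (by omega)⟩
  convert hrev using 2 <;> ext ω
  · refine and_congr ?_ ?_
    · rw [hsum ω i hik, neg_sub]
    · rw [← hreindex]
      exact forall_congr' fun j => imp_congr_right fun _ => imp_congr_right fun hj => by
        rw [hsum ω j hj, sub_neg]
  · simp only [E, hS, Set.mem_preimage, Set.mem_ofPred_eq]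

theorem measure_inter_eq_mul_of_past_future (hmeas : ∀ i, Measurable (X i))
    (hindep : iIndepFun X μ) (k : ℕ) {E F : Set Ω}
    (hE : MeasurableSet[⨆ j ∈ Set.Iio k, MeasurableSpace.comap (X j) inferInstance] E)
    (hF : MeasurableSet[⨆ j ∈ Set.Ici k, MeasurableSpace.comap (X j) inferInstance] F) :
    μ (E ∩ F) = μ E * μ F :=
  (Indep_iff _ _ μ).1 (indep_iSup_of_disjoint (fun j => (hmeas j).comap_le) hindep.iIndep
    (Set.Iio_disjoint_Ici le_rfl)) E F hE hF

theorem measure_strictPrefixMin_inter_weakSuffixMin [IsProbabilityMeasure μ]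
    (hmeas : ∀ i, Measurable (X i)) (hindep : iIndepFun X μ)
    (hident : ∀ i, μ.map (X i) = μ.map (X 0)) (hS : ∀ n ω, S n ω = ∑ i ∈ range n, X i ω)
    {i k : ℕ} (hik : i ≤ k) (n : ℕ) {A : Set ℝ} (hA : MeasurableSet A) :
    μ ({ω | S (k - i) ω - S k ω ∈ A ∧ ∀ j < k, S k ω < S j ω}
        ∩ {ω | ∀ j, k < j → j ≤ n → S k ω ≤ S j ω})
      = μ {ω | -S i ω ∈ A ∧ ∀ j, 1 ≤ j → j ≤ k → S j ω < 0}
        * μ {ω | ∀ j, k < j → j ≤ n → S k ω ≤ S j ω} := by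
  rw [measure_inter_eq_mul_of_past_future hmeas hindep k,
    measure_strictPrefixMin_eq_measure_prefix_neg hmeas hindep hident hS hik hA]
  · have hpast : ∀ j ≤ k, Measurable[⨆ l ∈ Set.Iio k,
        MeasurableSpace.comap (X l) inferInstance] (S j) := fun j hj => by
      simpa only [← funext (hS j)] using measurable_sum_iSup_comap X (range j) fun l hl => by
        simp only [coe_range, Set.mem_Iio] at hl ⊢; omega
    exact measurableSet_strictPrefixMin hpast hA
  · have hfuture : ∀ j, k < j → Measurable[⨆ l ∈ Set.Ici k,
        MeasurableSpace.comap (X l) inferInstance] (fun ω => S j ω - S k ω) := fun j hj => by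
      simpa only [hS, ← sum_Ico_eq_sub _ hj.le] using
        measurable_sum_iSup_comap X (Ico k j) fun l hl => by
          simp only [coe_Ico, Set.mem_Ico, Set.mem_Ici] at hl ⊢; omega
    exact measurableSet_weakSuffixMin hfuture n

end RandomWalk

theorem stmt2 {Ω : Type*} [MeasureSpace Ω] [IsProbabilityMeasure (ℙ : Measure Ω)]
    (X : ℕ → Ω → ℝ) (hmeas : ∀ i, Measurable (X i))
    (hindep : iIndepFun X ℙ)
    (hident : ∀ i, Measure.map (X i) ℙ = Measure.map (X 0) ℙ)
    (S L M : ℕ → Ω → ℝ) (τ : ℕ → Ω → ℕ)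
    (hS : ∀ n ω, S n ω = ∑ i ∈ Finset.range n, X i ω)
    (hL : ∀ n ω, L n ω = (Finset.range (n+1)).inf' Finset.nonempty_range_add_one
      (fun j => S j ω))
    (hM : ∀ (k : ℕ) (hk : 1 ≤ k) (ω : Ω),
      M k ω = (Finset.Icc 1 k).sup' (Finset.nonempty_Icc.mpr hk) (fun j => S j ω))
    (hτ : ∀ n ω, τ n ω = sInf {i | i ≤ n ∧ S i ω = L n ω})
    (i k n : ℕ) (hi : 1 ≤ i) (hik : i ≤ k) (hkn : k ≤ n)
    (hpos : 0 < ℙ {ω | M k ω < 0})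
    (A : Set ℝ) (hA : MeasurableSet A) :
    ℙ {ω | S (τ n ω - i) ω - S (τ n ω) ω ∈ A ∧ τ n ω = k}
      = (ℙ[|{ω | M k ω < 0}]) {ω | -S i ω ∈ A} * ℙ {ω | τ n ω = k} := by
  have hτk : ∀ ω, τ n ω = k ↔
      (∀ j < k, S k ω < S j ω) ∧ ∀ j, k < j → j ≤ n → S k ω ≤ S j ω := fun ω => by
    rw [hτ, hL]; exact sInf_argmin_range_eq_iff (S · ω) hkn
  have hevent : ∀ B : Set ℝ, {ω | S (τ n ω - i) ω - S (τ n ω) ω ∈ B ∧ τ n ω = k}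
      = {ω | S (k - i) ω - S k ω ∈ B ∧ ∀ j < k, S k ω < S j ω}
        ∩ {ω | ∀ j, k < j → j ≤ n → S k ω ≤ S j ω} := fun B => Set.ext fun ω =>
    ⟨fun ⟨hB, hτω⟩ => ⟨⟨hτω ▸ hB, ((hτk ω).1 hτω).1⟩, ((hτk ω).1 hτω).2⟩,
      fun ⟨⟨hB, hlt⟩, hle⟩ => ⟨(hτk ω).2 ⟨hlt, hle⟩ ▸ hB, (hτk ω).2 ⟨hlt, hle⟩⟩⟩
  have hmax : ∀ B : Set ℝ, {ω | -S i ω ∈ B ∧ ∀ j, 1 ≤ j → j ≤ k → S j ω < 0}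
      = {ω | M k ω < 0} ∩ {ω | -S i ω ∈ B} := fun B => by
    ext ω
    simp only [Set.mem_inter_iff, Set.mem_ofPred_eq, hM k (hi.trans hik), sup'_lt_iff, mem_Icc,
      and_imp]
    exact and_comm
  have hSi : MeasurableSet {ω | -S i ω ∈ A} := by
    rw [funext (hS i)]; exact (Finset.measurable_sum _ fun l _ => hmeas l).neg hA
  have hτset : {ω | τ n ω = k}
      = {ω | S (τ n ω - i) ω - S (τ n ω) ω ∈ Set.univ ∧ τ n ω = k} := by simp
  calc ℙ {ω | S (τ n ω - i) ω - S (τ n ω) ω ∈ A ∧ τ n ω = k}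
      = ℙ ({ω | M k ω < 0} ∩ {ω | -S i ω ∈ A})
          * ℙ {ω | ∀ j, k < j → j ≤ n → S k ω ≤ S j ω} := by
        rw [hevent, measure_strictPrefixMin_inter_weakSuffixMin hmeas hindep hident hS hik n hA,
          hmax]
    _ = (ℙ[|{ω | M k ω < 0}]) {ω | -S i ω ∈ A}
          * (ℙ {ω | M k ω < 0} * ℙ {ω | ∀ j, k < j → j ≤ n → S k ω ≤ S j ω}) := by
        rw [cond_apply' hSi, mul_mul_mul_comm,
          ENNReal.inv_mul_cancel hpos.ne' (measure_ne_top _ _), one_mul]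
    _ = (ℙ[|{ω | M k ω < 0}]) {ω | -S i ω ∈ A} * ℙ {ω | τ n ω = k} := by
        rw [hτset, hevent, measure_strictPrefixMin_inter_weakSuffixMin hmeas hindep hident hS hik n
          MeasurableSet.univ, hmax]
        simp only [Set.mem_univ, Set.ofPred_true, Set.inter_univ]
end

section
/- Let (ξ_n, η_n) be random vectors in ℝ² such that for each fixed ε > 0, conditionally on A_{n,ε} the pair converges in distribution to independent random variables (γ₁, γ₂), conditionally on B_{n,ε} it converges in distribution to the diagonal pair (γ₁, γ₁), and lim_{ε→0} lim_n P(A_{n,ε}) = p, lim_{ε→0} lim_n P(B_{n,ε}) = 1 − p, lim_{ε→0} lim_n P(D_{n,ε}) = 0 where A, B, D partition Ω. Then for all continuity points (x₁, x₂), lim_n P(ξ_n ≤ x₁, η_n ≤ x₂) = p · P(γ₁ ≤ x₁) P(γ₂ ≤ x₂) + (1 − p) · P(γ₁ ≤ min(x₁, x₂)). -/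
open MeasureTheory ProbabilityTheory Filter

theorem stmt14 {Ω : Type*} {m0 : MeasurableSpace Ω} (P : Measure Ω) [IsProbabilityMeasure P]
    (ξ η : ℕ → Ω → ℝ)
    (hξmeas : ∀ n, Measurable (ξ n)) (hηmeas : ∀ n, Measurable (η n))
    (A B D : ℝ → ℕ → Set Ω)
    (hmeasA : ∀ ε n, MeasurableSet (A ε n)) (hmeasB : ∀ ε n, MeasurableSet (B ε n))
    (hmeasD : ∀ ε n, MeasurableSet (D ε n))
    (hpart : ∀ ε n, A ε n ∪ B ε n ∪ D ε n = Set.univ)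
    (hdisj1 : ∀ ε n, Disjoint (A ε n) (B ε n))
    (hdisj2 : ∀ ε n, Disjoint (A ε n) (D ε n))
    (hdisj3 : ∀ ε n, Disjoint (B ε n) (D ε n))
    (F : ℝ → ℝ) (hFmono : Monotone F) (hFrange : ∀ x, F x ∈ Set.Icc (0:ℝ) 1)
    (hA : ∀ ε : ℝ, 0 < ε → ∀ x₁ x₂ : ℝ, ContinuousAt F x₁ → ContinuousAt F x₂ →
      Tendsto (fun n => ((P[|A ε n]) {ω | ξ n ω ≤ x₁ ∧ η n ω ≤ x₂}).toReal) atTop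
        (nhds (F x₁ * F x₂)))
    (hB : ∀ ε : ℝ, 0 < ε → ∀ x₁ x₂ : ℝ, ContinuousAt F x₁ → ContinuousAt F x₂ →
      Tendsto (fun n => ((P[|B ε n]) {ω | ξ n ω ≤ x₁ ∧ η n ω ≤ x₂}).toReal) atTop
        (nhds (F (min x₁ x₂))))
    (p : ℝ) (pA pB pD : ℝ → ℝ)
    (hpA : ∀ ε : ℝ, 0 < ε → Tendsto (fun n => (P (A ε n)).toReal) atTop (nhds (pA ε)))
    (hpB : ∀ ε : ℝ, 0 < ε → Tendsto (fun n => (P (B ε n)).toReal) atTop (nhds (pB ε)))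
    (hpD : ∀ ε : ℝ, 0 < ε → Tendsto (fun n => (P (D ε n)).toReal) atTop (nhds (pD ε)))
    (hpA0 : Tendsto pA (nhdsWithin 0 (Set.Ioi 0)) (nhds p))
    (hpB0 : Tendsto pB (nhdsWithin 0 (Set.Ioi 0)) (nhds (1 - p)))
    (hpD0 : Tendsto pD (nhdsWithin 0 (Set.Ioi 0)) (nhds 0)) :
    ∀ x₁ x₂ : ℝ, ContinuousAt F x₁ → ContinuousAt F x₂ →
      Tendsto (fun n => (P {ω | ξ n ω ≤ x₁ ∧ η n ω ≤ x₂}).toReal) atTop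
        (nhds (p * (F x₁ * F x₂) + (1 - p) * F (min x₁ x₂))) := by
  intro x₁ x₂ hc₁ hc₂
  set L : ℝ := p * (F x₁ * F x₂) + (1 - p) * F (min x₁ x₂) with hLdef
  rw [Metric.tendsto_atTop]
  intro δ hδ
  have hδ6 : 0 < δ / 6 := by linarith
  -- choose a suitable ε
  have hev : ∀ᶠ ε in nhdsWithin (0:ℝ) (Set.Ioi 0),
      0 < ε ∧ |pA ε - p| < δ/6 ∧ |pB ε - (1-p)| < δ/6 ∧ |pD ε - 0| < δ/6 := by
    have h1 := hpA0 (Metric.ball_mem_nhds p hδ6)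
    have h2 := hpB0 (Metric.ball_mem_nhds (1-p) hδ6)
    have h3 := hpD0 (Metric.ball_mem_nhds 0 hδ6)
    filter_upwards [self_mem_nhdsWithin, h1, h2, h3] with ε hε h1 h2 h3
    refine ⟨hε, ?_, ?_, ?_⟩
    · simpa [Real.dist_eq] using h1
    · have : pB ε - (1-p) = pB ε + p - 1 := by ring
      rw [this]; simpa [Real.dist_eq] using h2
    · simpa [Real.dist_eq] using h3
  obtain ⟨ε, hε, hA', hB', hD'⟩ := hev.exists
  set E : ℕ → Set Ω := fun n => {ω | ξ n ω ≤ x₁ ∧ η n ω ≤ x₂} with hEdef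
  have hEmeas : ∀ n, MeasurableSet (E n) := by
    intro n
    exact ((hξmeas n measurableSet_Iic).inter (hηmeas n measurableSet_Iic))
  -- key decomposition
  have key : ∀ n, (P (E n)).toReal =
      ((P[|A ε n]) (E n)).toReal * (P (A ε n)).toReal
      + ((P[|B ε n]) (E n)).toReal * (P (B ε n)).toReal
      + (P (E n ∩ D ε n)).toReal := by
    intro n
    have h1 : ((P[|A ε n]) (E n)).toReal * (P (A ε n)).toReal
        = (P (A ε n ∩ E n)).toReal := by
      rw [← ENNReal.toReal_mul, cond_mul_eq_inter (hmeasA ε n) (E n) P]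
    have h2 : ((P[|B ε n]) (E n)).toReal * (P (B ε n)).toReal
        = (P (B ε n ∩ E n)).toReal := by
      rw [← ENNReal.toReal_mul, cond_mul_eq_inter (hmeasB ε n) (E n) P]
    rw [h1, h2]
    have hdecomp : E n = (A ε n ∩ E n) ∪ (B ε n ∩ E n) ∪ (E n ∩ D ε n) := by
      have := hpart ε n
      rw [Set.inter_comm (E n)]
      rw [← Set.union_inter_distrib_right, ← Set.union_inter_distrib_right, this,
        Set.univ_inter]
    have hd1 : Disjoint (A ε n ∩ E n) (B ε n ∩ E n) :=
      ((hdisj1 ε n).mono Set.inter_subset_left Set.inter_subset_left)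
    have hd2 : Disjoint ((A ε n ∩ E n) ∪ (B ε n ∩ E n)) (E n ∩ D ε n) := by
      apply Disjoint.union_left
      · exact ((hdisj2 ε n).mono Set.inter_subset_left Set.inter_subset_right)
      · exact ((hdisj3 ε n).mono Set.inter_subset_left Set.inter_subset_right)
    have hm1 : MeasurableSet (A ε n ∩ E n) := (hmeasA ε n).inter (hEmeas n)
    have hm2 : MeasurableSet (B ε n ∩ E n) := (hmeasB ε n).inter (hEmeas n)
    have hm3 : MeasurableSet (E n ∩ D ε n) := (hEmeas n).inter (hmeasD ε n)
    calc (P (E n)).toReal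
        = (P ((A ε n ∩ E n) ∪ (B ε n ∩ E n) ∪ (E n ∩ D ε n))).toReal := by
          rw [← hdecomp]
      _ = (P (A ε n ∩ E n)).toReal + (P (B ε n ∩ E n)).toReal
          + (P (E n ∩ D ε n)).toReal := by
          rw [measure_union hd2 hm3, measure_union hd1 hm2,
            ENNReal.toReal_add (by finiteness) (by finiteness),
            ENNReal.toReal_add (by finiteness) (by finiteness)]
  -- limits for this ε
  set G : ℝ := (F x₁ * F x₂) * pA ε + F (min x₁ x₂) * pB ε with hGdef
  have hgt : Tendsto (fun n => ((P[|A ε n]) (E n)).toReal * (P (A ε n)).toReal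
      + ((P[|B ε n]) (E n)).toReal * (P (B ε n)).toReal) atTop (nhds G) :=
    ((hA ε hε x₁ x₂ hc₁ hc₂).mul (hpA ε hε)).add
      ((hB ε hε x₁ x₂ hc₁ hc₂).mul (hpB ε hε))
  have hevg : ∀ᶠ n in atTop, |((P[|A ε n]) (E n)).toReal * (P (A ε n)).toReal
      + ((P[|B ε n]) (E n)).toReal * (P (B ε n)).toReal - G| < δ/6 := by
    have := Metric.tendsto_atTop.mp hgt (δ/6) hδ6
    obtain ⟨N, hN⟩ := this
    filter_upwards [eventually_ge_atTop N] with n hn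
    simpa [Real.dist_eq] using hN n hn
  have hevd : ∀ᶠ n in atTop, (P (D ε n)).toReal < pD ε + δ/6 := by
    have := Metric.tendsto_atTop.mp (hpD ε hε) (δ/6) hδ6
    obtain ⟨N, hN⟩ := this
    filter_upwards [eventually_ge_atTop N] with n hn
    have := hN n hn
    rw [Real.dist_eq, abs_lt] at this
    linarith [this.1, this.2]
  rw [← Filter.eventually_atTop]
  filter_upwards [hevg, hevd] with n hg hd
  rw [Real.dist_eq, key n]
  have hdbound : (P (E n ∩ D ε n)).toReal ≤ (P (D ε n)).toReal := by
    apply ENNReal.toReal_mono (by finiteness)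
    exact measure_mono Set.inter_subset_right
  have hdpos : 0 ≤ (P (E n ∩ D ε n)).toReal := ENNReal.toReal_nonneg
  have hGL : |G - L| ≤ δ/6 + δ/6 := by
    have hF1 : F x₁ * F x₂ ∈ Set.Icc (0:ℝ) 1 := by
      have h1 := hFrange x₁; have h2 := hFrange x₂
      constructor
      · exact mul_nonneg h1.1 h2.1
      · exact mul_le_one₀ h1.2 h2.1 h2.2
    have hF2 := hFrange (min x₁ x₂)
    have e1 : |F x₁ * F x₂ * (pA ε - p)| ≤ |pA ε - p| := by
      rw [abs_mul]
      calc |F x₁ * F x₂| * |pA ε - p| ≤ 1 * |pA ε - p| := by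
            apply mul_le_mul_of_nonneg_right _ (abs_nonneg _)
            rw [abs_of_nonneg hF1.1]; exact hF1.2
        _ = |pA ε - p| := one_mul _
    have e2 : |F (min x₁ x₂) * (pB ε - (1-p))| ≤ |pB ε - (1-p)| := by
      rw [abs_mul]
      calc |F (min x₁ x₂)| * |pB ε - (1-p)| ≤ 1 * |pB ε - (1-p)| := by
            apply mul_le_mul_of_nonneg_right _ (abs_nonneg _)
            rw [abs_of_nonneg hF2.1]; exact hF2.2
        _ = |pB ε - (1-p)| := one_mul _
    have : G - L = F x₁ * F x₂ * (pA ε - p) + F (min x₁ x₂) * (pB ε - (1-p)) := by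
      rw [hGdef, hLdef]; ring
    rw [this]
    calc |F x₁ * F x₂ * (pA ε - p) + F (min x₁ x₂) * (pB ε - (1-p))|
        ≤ |F x₁ * F x₂ * (pA ε - p)| + |F (min x₁ x₂) * (pB ε - (1-p))| := abs_add_le _ _
      _ ≤ δ/6 + δ/6 := add_le_add (e1.trans hA'.le) (e2.trans hB'.le)
    -- done
  have habs : |((P[|A ε n]) (E n)).toReal * (P (A ε n)).toReal
      + ((P[|B ε n]) (E n)).toReal * (P (B ε n)).toReal
      + (P (E n ∩ D ε n)).toReal - L|
      ≤ |((P[|A ε n]) (E n)).toReal * (P (A ε n)).toReal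
      + ((P[|B ε n]) (E n)).toReal * (P (B ε n)).toReal - G|
      + |G - L| + (P (E n ∩ D ε n)).toReal := by
    set a := ((P[|A ε n]) (E n)).toReal * (P (A ε n)).toReal
      + ((P[|B ε n]) (E n)).toReal * (P (B ε n)).toReal
    set d := (P (E n ∩ D ε n)).toReal
    calc |a + d - L| = |(a - G) + (G - L) + d| := by ring_nf
      _ ≤ |(a - G) + (G - L)| + |d| := abs_add_le _ _
      _ ≤ |a - G| + |G - L| + |d| := by
          have := abs_add_le (a - G) (G - L); linarith
      _ = |a - G| + |G - L| + d := by rw [abs_of_nonneg hdpos]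
  have hDsmall : (P (E n ∩ D ε n)).toReal < δ/3 := by
    have : |pD ε| < δ/6 := by simpa using hD'
    have := abs_lt.mp this
    calc (P (E n ∩ D ε n)).toReal ≤ (P (D ε n)).toReal := hdbound
      _ < pD ε + δ/6 := hd
      _ < δ/3 := by linarith
  calc |((P[|A ε n]) (E n)).toReal * (P (A ε n)).toReal
      + ((P[|B ε n]) (E n)).toReal * (P (B ε n)).toReal
      + (P (E n ∩ D ε n)).toReal - L| ≤ _ := habs
    _ < δ/6 + (δ/6 + δ/6) + δ/3 := by
        apply add_lt_add_of_le_of_lt _ hDsmall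
        exact add_le_add hg.le hGL
    _ < δ := by linarith
end

section
/- Under the Spitzer–Doney condition, for every fixed i ∈ ℕ and every bounded continuous function f : ℝ³ → ℝ, and for n ≥ i: E[ f(μ'_{i,n}, S'_{i,n}, Σ_{j=0}^{n−1−τ_n} μ'_{j+1,n} e^{−S'_{j,n}}) ; τ_n + i ≤ n ] = Σ_{k=0}^{n−i} E[ f(μ_i, S_i, Σ_{j=0}^{n−1−k} μ_{j+1} e^{−S_j}) | L_{n−k} ≥ 0 ] · P(τ_n = k), where μ'_{j,n} = μ_{τ_n + j} and S'_{j,n} = S_{τ_n + j} − S_{τ_n}. -/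
/-!
Write `Yₗ = (X_{l+1}, μ_{l+1})`. For `k ≤ n`, `τ_n = k` holds exactly when the walk has a strict
minimum at `k` among its first `k` steps, an event `A` of `Y₀, …, Y_{k-1}`, and the walk restarted
at time `k` stays nonnegative for `n - k` steps, an event `{Y' ∈ B}` of the shifted environment
`Y' = (Y_{k+j})_j`. Since `Y'` is independent of `Y₀, …, Y_{k-1}` and has the law of `(Yⱼ)ⱼ`,
`E[G(Y'); A ∩ {Y' ∈ B}] = P(A) · E[G(Y); Y ∈ B]` for every functional `G`. Taking `G = 1` gives
`P(τ_n = k) = P(A) · P(L_{n-k} ≥ 0)`, hence `E[G(Y'); τ_n = k] = E[G(Y) | L_{n-k} ≥ 0] · P(τ_n = k)`;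
summing over `k ≤ n - i` gives the identity.
-/

open MeasureTheory ProbabilityTheory Filter

namespace ProbabilityTheory

variable {Ω E : Type*} {mΩ : MeasurableSpace Ω} {mE : MeasurableSpace E} {P : Measure Ω}
  {Y : ℕ → Ω → E}

lemma measurable_iSup_comap_lt_sum {k j : ℕ} (hjk : j ≤ k) {g : E → ℝ} (hg : Measurable g) :
    Measurable[⨆ l < k, mE.comap (Y l)] fun ω => ∑ l ∈ Finset.range j, g (Y l ω) := by
  refine Finset.measurable_sum _ fun l hl => hg.comp ?_
  exact (comap_measurable (Y l)).mono (le_iSup₂ (f := fun l (_ : l < k) => mE.comap (Y l)) l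
    ((Finset.mem_range.1 hl).trans_le hjk)) le_rfl

lemma iIndepFun.indep_iSup_comap_shift (hY : ∀ l, Measurable (Y l)) (h : iIndepFun Y P)
    (k : ℕ) :
    Indep (⨆ l < k, mE.comap (Y l)) (MeasurableSpace.pi.comap fun ω j => Y (k + j) ω) P := by
  have hpast_future := indep_iSup_of_disjoint (fun l => (hY l).comap_le)
    ((iIndepFun_iff_iIndep _ _ _).1 h) (Set.disjoint_left.2 fun l (hl : l < k) (hl' : k ≤ l) =>
      (hl.trans_le hl').false)
  -- `@` because the σ-algebra on `Ω` here is not the instance `mΩ`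
  have hfuture : Measurable[⨆ l ∈ Set.Ici k, mE.comap (Y l)] fun ω j => Y (k + j) ω :=
    @measurable_pi_lambda _ _ _ (_) _ _ fun j => (comap_measurable (Y (k + j))).mono
      (le_iSup₂ (f := fun l (_ : l ∈ Set.Ici k) => mE.comap (Y l)) (k + j) (by simp)) le_rfl
  exact indep_of_indep_of_le_right hpast_future hfuture.comap_le

lemma iIndepFun.map_shift (hY : ∀ l, Measurable (Y l)) (h : iIndepFun Y P)
    (hid : ∀ l, P.map (Y l) = P.map (Y 0)) (k : ℕ) :
    P.map (fun ω j => Y (k + j) ω) = P.map (fun ω j => Y j ω) := by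
  rw [(h.precomp (add_right_injective k)).map_fun_eq_infinitePi_map fun j => hY _,
    h.map_fun_eq_infinitePi_map hY]
  simp only [hid]

lemma iIndepFun.setIntegral_inter_preimage_shift (hY : ∀ l, Measurable (Y l))
    (h : iIndepFun Y P) (hid : ∀ l, P.map (Y l) = P.map (Y 0)) {k : ℕ} {A : Set Ω}
    (hA : MeasurableSet[⨆ l < k, mE.comap (Y l)] A) {B : Set (ℕ → E)} (hB : MeasurableSet B)
    {F : (ℕ → E) → ℝ} (hF : Measurable F) :
    ∫ ω in A ∩ (fun ω j => Y (k + j) ω) ⁻¹' B, F (fun j => Y (k + j) ω) ∂P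
      = P.real A * ∫ ω in (fun ω j => Y j ω) ⁻¹' B, F (fun j => Y j ω) ∂P := by
  have hV : Measurable fun ω j => Y (k + j) ω := measurable_pi_lambda _ fun j => hY _
  have hV₀ : Measurable fun ω j => Y j ω := measurable_pi_lambda _ hY
  have hpast_le : ⨆ l < k, mE.comap (Y l) ≤ mΩ := iSup₂_le fun l _ => (hY l).comap_le
  calc ∫ ω in A ∩ (fun ω j => Y (k + j) ω) ⁻¹' B, F (fun j => Y (k + j) ω) ∂P
      = ∫ ω in A, B.indicator F (fun j => Y (k + j) ω) ∂P := by
        rw [← setIntegral_indicator (hV hB)]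
        rfl
    _ = P.real A * ∫ ω, B.indicator F (fun j => Y (k + j) ω) ∂P :=
        (h.indep_iSup_comap_shift hY k).setIntegral_eq_mul hpast_le hV.aemeasurable hA
          (hF.indicator hB).aestronglyMeasurable
    _ = P.real A * ∫ ω in (fun ω j => Y j ω) ⁻¹' B, F (fun j => Y j ω) ∂P := by
        rw [← integral_map hV.aemeasurable (hF.indicator hB).aestronglyMeasurable,
          h.map_shift hY hid, integral_map hV₀.aemeasurable (hF.indicator hB).aestronglyMeasurable,
          ← integral_indicator (hV₀ hB)]
        rfl

lemma iIndepFun.measureReal_inter_preimage_shift (hY : ∀ l, Measurable (Y l))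
    (h : iIndepFun Y P) (hid : ∀ l, P.map (Y l) = P.map (Y 0)) {k : ℕ} {A : Set Ω}
    (hA : MeasurableSet[⨆ l < k, mE.comap (Y l)] A) {B : Set (ℕ → E)} (hB : MeasurableSet B) :
    P.real (A ∩ (fun ω j => Y (k + j) ω) ⁻¹' B) = P.real A * P.real ((fun ω j => Y j ω) ⁻¹' B) := by
  simpa using h.setIntegral_inter_preimage_shift hY hid hA hB (F := fun _ => (1 : ℝ))
    measurable_const

lemma measureReal_mul_integral_cond [IsFiniteMeasure P] (s : Set Ω) (g : Ω → ℝ) :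
    P.real s * ∫ ω, g ω ∂P[|s] = ∫ ω in s, g ω ∂P := by
  rcases eq_or_ne (P s) 0 with hs | hs
  · simp [Measure.restrict_eq_zero.2 hs, measureReal_def, hs]
  · rw [cond, integral_smul_measure, smul_eq_mul, ENNReal.toReal_inv, ← mul_assoc,
      measureReal_def, mul_inv_cancel₀ (ENNReal.toReal_ne_zero.2 ⟨hs, measure_ne_top P s⟩),
      one_mul]

end ProbabilityTheory

section Argmin

variable {α : Type*} [LinearOrder α]

lemma le_inf'_range_iff {s : ℕ → α} {a : α} {n : ℕ} :
    a ≤ (Finset.range (n + 1)).inf' Finset.nonempty_range_add_one s ↔ ∀ j ≤ n, a ≤ s j := by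
  simp [Finset.le_inf'_iff]

noncomputable def firstArgmin (s : ℕ → α) (n : ℕ) : ℕ :=
  sInf {i | i ≤ n ∧ s i = (Finset.range (n + 1)).inf' Finset.nonempty_range_add_one s}

lemma firstArgmin_eq_iff {s : ℕ → α} {n k : ℕ} (hk : k ≤ n) :
    firstArgmin s n = k ↔ (∀ j < k, s k < s j) ∧ ∀ j ≤ n - k, s k ≤ s (k + j) := by
  set m := (Finset.range (n + 1)).inf' Finset.nonempty_range_add_one s
  have hm_le : ∀ j ≤ n, m ≤ s j := le_inf'_range_iff.1 le_rfl
  have hne : {i | i ≤ n ∧ s i = m}.Nonempty := by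
    obtain ⟨j, hj, hjm⟩ := Finset.exists_mem_eq_inf' Finset.nonempty_range_add_one s
    exact ⟨j, by simpa [Nat.lt_succ_iff] using hj, hjm.symm⟩
  constructor
  · rintro rfl
    obtain ⟨hkn, hkm⟩ := Nat.sInf_mem hne
    refine ⟨fun j hj => ?_, fun j hj => hkm ▸ hm_le _ (by omega)⟩
    exact hkm ▸ (hm_le j (by omega)).lt_of_ne'
      fun hjm => Nat.notMem_of_lt_sInf hj ⟨by omega, hjm⟩
  · rintro ⟨hbefore, hafter⟩
    have hkm : s k = m := by
      refine le_antisymm (le_inf'_range_iff.2 fun j hj => ?_) (hm_le k hk)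
      rcases lt_or_ge j k with hjk | hjk
      · exact (hbefore j hjk).le
      · simpa [Nat.add_sub_cancel' hjk] using hafter (j - k) (by omega)
    refine le_antisymm (Nat.sInf_le ⟨hk, hkm⟩) (le_csInf hne fun j ⟨_, hjm⟩ => ?_)
    by_contra! hjk
    exact (hbefore j hjk).ne (hkm.trans hjm.symm)

end Argmin

section Walk

def walk (y : ℕ → ℝ × ℝ) (j : ℕ) : ℝ := ∑ l ∈ Finset.range j, (y l).1

@[fun_prop]
lemma measurable_walk (j : ℕ) : Measurable fun y : ℕ → ℝ × ℝ => walk y j := by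
  unfold walk; fun_prop

lemma walk_shift (y : ℕ → ℝ × ℝ) (k j : ℕ) :
    walk (fun l => y (k + l)) j = walk y (k + j) - walk y k := by
  simp [walk, Finset.sum_range_add]

lemma firstArgmin_walk_eq_iff {y : ℕ → ℝ × ℝ} {n k : ℕ} (hk : k ≤ n) :
    firstArgmin (walk y) n = k ↔
      (∀ j < k, walk y k < walk y j) ∧ ∀ j ≤ n - k, 0 ≤ walk (fun l => y (k + l)) j := by
  simp [firstArgmin_eq_iff hk, walk_shift]

variable {Ω : Type*} {mΩ : MeasurableSpace Ω} {P : Measure Ω} {Y : ℕ → Ω → ℝ × ℝ}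

lemma measurableSet_forall_walk_lt (k : ℕ) :
    MeasurableSet[⨆ l < k, MeasurableSpace.comap (Y l) inferInstance]
      {ω | ∀ j < k, walk (fun l => Y l ω) k < walk (fun l => Y l ω) j} := by
  simp only [Set.ofPred_forall]
  exact MeasurableSet.iInter fun j => MeasurableSet.iInter fun hj =>
    measurableSet_lt (measurable_iSup_comap_lt_sum le_rfl measurable_fst)
      (measurable_iSup_comap_lt_sum hj.le measurable_fst)

lemma setOf_firstArgmin_walk_eq {n k : ℕ} (hk : k ≤ n) :
    {ω | firstArgmin (walk fun l => Y l ω) n = k}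
      = {ω | ∀ j < k, walk (fun l => Y l ω) k < walk (fun l => Y l ω) j}
        ∩ (fun ω j => Y (k + j) ω) ⁻¹' {y | ∀ j ≤ n - k, 0 ≤ walk y j} := by
  ext ω
  exact firstArgmin_walk_eq_iff hk

lemma measurableSet_forall_walk_nonneg (m : ℕ) :
    MeasurableSet {y : ℕ → ℝ × ℝ | ∀ j ≤ m, 0 ≤ walk y j} := by
  simp only [Set.ofPred_forall]
  exact MeasurableSet.iInter fun j => MeasurableSet.iInter fun _ =>
    measurableSet_le measurable_const (measurable_walk j)

lemma measurableSet_firstArgmin_walk_eq (hY : ∀ l, Measurable (Y l)) {n k : ℕ} (hk : k ≤ n) :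
    MeasurableSet {ω | firstArgmin (walk fun l => Y l ω) n = k} := by
  rw [setOf_firstArgmin_walk_eq hk]
  exact (iSup₂_le (fun l _ => (hY l).comap_le) _ (measurableSet_forall_walk_lt k)).inter
    ((measurable_pi_lambda _ fun j => hY _) (measurableSet_forall_walk_nonneg _))

lemma ProbabilityTheory.iIndepFun.setIntegral_firstArgmin_walk_eq (hY : ∀ l, Measurable (Y l))
    (h : iIndepFun Y P) (hid : ∀ l, P.map (Y l) = P.map (Y 0)) {F : (ℕ → ℝ × ℝ) → ℝ}
    (hF : Measurable F) {n k : ℕ} (hk : k ≤ n) :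
    ∫ ω in {ω | firstArgmin (walk fun l => Y l ω) n = k}, F (fun j => Y (k + j) ω) ∂P
      = (∫ ω, F (fun j => Y j ω) ∂P[|{ω | ∀ j ≤ n - k, 0 ≤ walk (fun l => Y l ω) j}])
        * P.real {ω | firstArgmin (walk fun l => Y l ω) n = k} := by
  have := h.isProbabilityMeasure
  have hB := measurableSet_forall_walk_nonneg (n - k)
  change _ = (∫ ω, F (fun j => Y j ω) ∂P[|(fun ω j => Y j ω) ⁻¹' {y | ∀ j ≤ n - k, 0 ≤ walk y j}])
    * _
  rw [setOf_firstArgmin_walk_eq hk,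
    h.setIntegral_inter_preimage_shift hY hid (measurableSet_forall_walk_lt k) hB hF,
    h.measureReal_inter_preimage_shift hY hid (measurableSet_forall_walk_lt k) hB,
    ← measureReal_mul_integral_cond]
  ring

lemma ProbabilityTheory.iIndepFun.setIntegral_add_le_firstArgmin (hY : ∀ l, Measurable (Y l))
    (h : iIndepFun Y P) (hid : ∀ l, P.map (Y l) = P.map (Y 0)) {n i : ℕ} (hin : i ≤ n)
    {τ : Ω → ℕ} (hτ : ∀ ω, τ ω = firstArgmin (walk fun l => Y l ω) n)
    {F : ℕ → (ℕ → ℝ × ℝ) → ℝ} (hF : ∀ m, Measurable (F m)) {C : ℝ}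
    (hFC : ∀ m y, ‖F m y‖ ≤ C) :
    ∫ ω in {ω | τ ω + i ≤ n}, F (n - τ ω) (fun j => Y (τ ω + j) ω) ∂P
      = ∑ k ∈ Finset.range (n - i + 1),
          (∫ ω, F (n - k) (fun j => Y j ω) ∂P[|{ω | ∀ j ≤ n - k, 0 ≤ walk (fun l => Y l ω) j}])
            * P.real {ω | τ ω = k} := by
  obtain rfl : τ = _ := funext hτ
  have := h.isProbabilityMeasure
  have hrange : ∀ k ∈ Finset.range (n - i + 1), k ≤ n := fun k hk => by
    have := Finset.mem_range.1 hk; omega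
  have hsplit : {ω | firstArgmin (walk fun l => Y l ω) n + i ≤ n}
      = ⋃ k ∈ Finset.range (n - i + 1), {ω | firstArgmin (walk fun l => Y l ω) n = k} := by
    ext ω
    simp only [Set.mem_ofPred_eq, Set.mem_iUnion, Finset.mem_range, exists_prop,
      exists_eq_right']
    omega
  have hEqOn : ∀ k, Set.EqOn (fun ω => F (n - firstArgmin (walk fun l => Y l ω) n)
      fun j => Y (firstArgmin (walk fun l => Y l ω) n + j) ω) (fun ω => F (n - k)
      fun j => Y (k + j) ω) {ω | firstArgmin (walk fun l => Y l ω) n = k} := by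
    intro k ω (hω : _ = k)
    simp only [hω]
  have hint : ∀ k, Integrable (fun ω => F (n - k) fun j => Y (k + j) ω) P := fun k =>
    .of_bound ((hF _).comp (measurable_pi_lambda _ fun j => hY _)).aestronglyMeasurable C
      (ae_of_all _ fun ω => hFC _ _)
  rw [hsplit, integral_biUnion_finset _
    (fun k hk => measurableSet_firstArgmin_walk_eq hY (hrange k hk))
    (fun a _ b _ hab => Set.disjoint_left.2 fun ω (ha : _ = a) (hb : _ = b) =>
      hab (ha.symm.trans hb))
    (fun k hk => (hint k).integrableOn.congr_fun (hEqOn k).symm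
      (measurableSet_firstArgmin_walk_eq hY (hrange k hk)))]
  refine Finset.sum_congr rfl fun k hk => ?_
  rw [setIntegral_congr_fun (measurableSet_firstArgmin_walk_eq hY (hrange k hk)) (hEqOn k)]
  exact h.setIntegral_firstArgmin_walk_eq hY hid (hF _) (hrange k hk)

end Walk

open Finset in
theorem stmt19_general {Ω : Type*} {m0 : MeasurableSpace Ω} (P : Measure Ω)
    (X : ℕ → Ω → ℝ) (μ : ℕ → Ω → ℝ)
    (hXmeas : ∀ i, Measurable (X i)) (hμmeas : ∀ i, Measurable (μ i))
    (hindep : iIndepFun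
      (fun i ω => (X (i+1) ω, μ (i+1) ω)) P)
    (hident : ∀ i, Measure.map (fun ω => (X (i+1) ω, μ (i+1) ω)) P
      = Measure.map (fun ω => (X 1 ω, μ 1 ω)) P)
    (S L : ℕ → Ω → ℝ) (τ : ℕ → Ω → ℕ)
    (hS : ∀ n ω, S n ω = ∑ j ∈ Finset.range n, X (j+1) ω)
    (hL : ∀ n ω, L n ω = (Finset.range (n+1)).inf' Finset.nonempty_range_add_one
      (fun j => S j ω))
    (hτ : ∀ n ω, τ n ω = sInf {i | i ≤ n ∧ S i ω = L n ω})
    (i n : ℕ) (hi : 1 ≤ i) (hin : i ≤ n)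
    (f : BoundedContinuousFunction (ℝ × ℝ × ℝ) ℝ) :
    ∫ ω in {ω | τ n ω + i ≤ n},
        f (μ (τ n ω + i) ω, S (τ n ω + i) ω - S (τ n ω) ω,
          ∑ j ∈ Finset.range (n - τ n ω), μ (τ n ω + j + 1) ω
            * Real.exp (-(S (τ n ω + j) ω - S (τ n ω) ω))) ∂P
      = ∑ k ∈ Finset.range (n - i + 1),
          (∫ ω, f (μ i ω, S i ω,
              ∑ j ∈ Finset.range (n - k), μ (j+1) ω * Real.exp (-(S j ω)))
            ∂(P[|{ω | 0 ≤ L (n - k) ω}]))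
          * (P {ω | τ n ω = k}).toReal := by
  set Y : ℕ → Ω → ℝ × ℝ := fun l ω => (X (l + 1) ω, μ (l + 1) ω)
  have hSY : ∀ j ω, S j ω = walk (fun l => Y l ω) j := by simp [hS, walk, Y]
  have hτY : ∀ ω, τ n ω = firstArgmin (walk fun l => Y l ω) n := by
    simp only [hτ, hL, hSY, firstArgmin, implies_true]
  obtain ⟨i, rfl⟩ : ∃ i', i = i' + 1 := ⟨i - 1, by omega⟩
  let F (m : ℕ) (y : ℕ → ℝ × ℝ) : ℝ :=
    f ((y i).2, walk y (i + 1), ∑ j ∈ range m, (y j).2 * Real.exp (-walk y j))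
  have hpost : ∀ ω, f (μ (τ n ω + (i + 1)) ω, S (τ n ω + (i + 1)) ω - S (τ n ω) ω,
      ∑ j ∈ range (n - τ n ω), μ (τ n ω + j + 1) ω * Real.exp (-(S (τ n ω + j) ω - S (τ n ω) ω)))
      = F (n - τ n ω) fun j => Y (τ n ω + j) ω := fun ω => by
    simp only [F, hSY, walk_shift (fun l => Y l ω) (τ n ω)]
    rfl
  have hcond : ∀ k, ∫ ω, f (μ (i + 1) ω, S (i + 1) ω,
      ∑ j ∈ range (n - k), μ (j + 1) ω * Real.exp (-S j ω)) ∂P[|{ω | 0 ≤ L (n - k) ω}]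
      = ∫ ω, F (n - k) (fun j => Y j ω)
          ∂P[|{ω | ∀ j ≤ n - k, 0 ≤ walk (fun l => Y l ω) j}] := fun k => by
    simp only [hL, hSY, le_inf'_range_iff]
    rfl
  simp only [hpost, hcond]
  exact hindep.setIntegral_add_le_firstArgmin (fun l => (hXmeas _).prodMk (hμmeas _)) hident hin
    hτY (fun m => f.continuous.measurable.comp (by fun_prop)) (fun _ _ => f.norm_coe_le_norm _)

theorem stmt19 {Ω : Type*} {m0 : MeasurableSpace Ω} (P : Measure Ω) [IsProbabilityMeasure P]
    (X : ℕ → Ω → ℝ) (μ : ℕ → Ω → ℝ)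
    (hXmeas : ∀ i, Measurable (X i)) (hμmeas : ∀ i, Measurable (μ i))
    (hμpos : ∀ i ω, 0 < μ i ω)
    (hindep : iIndepFun
      (fun i ω => (X (i+1) ω, μ (i+1) ω)) P)
    (hident : ∀ i, Measure.map (fun ω => (X (i+1) ω, μ (i+1) ω)) P
      = Measure.map (fun ω => (X 1 ω, μ 1 ω)) P)
    (S L : ℕ → Ω → ℝ) (τ : ℕ → Ω → ℕ)
    (hS : ∀ n ω, S n ω = ∑ j ∈ Finset.range n, X (j+1) ω)
    (hL : ∀ n ω, L n ω = (Finset.range (n+1)).inf' Finset.nonempty_range_add_one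
      (fun j => S j ω))
    (hτ : ∀ n ω, τ n ω = sInf {i | i ≤ n ∧ S i ω = L n ω})
    (ρ : ℝ) (hρ : ρ ∈ Set.Ioo (0:ℝ) 1)
    (hSD : Tendsto (fun n => (P {ω | 0 < S n ω}).toReal) atTop (nhds ρ))
    (hpos : ∀ m, 0 < P {ω | 0 ≤ L m ω})
    (i n : ℕ) (hi : 1 ≤ i) (hin : i ≤ n)
    (f : BoundedContinuousFunction (ℝ × ℝ × ℝ) ℝ) :
    ∫ ω in {ω | τ n ω + i ≤ n},
        f (μ (τ n ω + i) ω, S (τ n ω + i) ω - S (τ n ω) ω,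
          ∑ j ∈ Finset.range (n - τ n ω), μ (τ n ω + j + 1) ω
            * Real.exp (-(S (τ n ω + j) ω - S (τ n ω) ω))) ∂P
      = ∑ k ∈ Finset.range (n - i + 1),
          (∫ ω, f (μ i ω, S i ω,
              ∑ j ∈ Finset.range (n - k), μ (j+1) ω * Real.exp (-(S j ω)))
            ∂(P[|{ω | 0 ≤ L (n - k) ω}]))
          * (P {ω | τ n ω = k}).toReal :=
  stmt19_general (m0 := m0) P X μ hXmeas hμmeas hindep hident S L τ hS hL hτ i n hi hin f
end
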